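/- arXiv:0810.4627 — 2 statements merged into one kernel-verified Lean document; each statement's English description precedes it below -/
import Mathlib

section
/- Let φ be a code from a shift space X to an irreducible shift space Y. Then any two of the following conditions imply the third: (1) φ is open; (2) φ is constant-to-one; (3) φ is bi-closing. -/
open Set Function Filter

variable {A : Type*} {B : Type*} {C : Type*}

/-- The shift map on the full shift. -/
def shiftMap (x : ℤ → A) : ℤ → A := fun i => x (i + 1)

/-- A shift space (subshift): a closed shift-invariant subset of the full shift. -/
def IsSubshift [TopologicalSpace A] (X : Set (ℤ → A)) : Prop :=
  IsClosed X ∧ shiftMap '' X = X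

/-- The word `w` occurs in `x` at position `k`. -/
def OccursAt (x : ℤ → A) (k : ℤ) (w : List A) : Prop :=
  ∀ i : Fin w.length, x (k + ((i : ℕ) : ℤ)) = w.get i

/-- The word `w` belongs to the language of `X`. -/
def WordIn (X : Set (ℤ → A)) (w : List A) : Prop :=
  ∃ x ∈ X, ∃ k : ℤ, OccursAt x k w

/-- Irreducibility of a shift space. -/
def IrreducibleSubshift (X : Set (ℤ → A)) : Prop :=
  ∀ u v : List A, WordIn X u → WordIn X v → ∃ w : List A, WordIn X (u ++ w ++ v)

/-- Nonwandering shift space. -/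
def NonwanderingSubshift (X : Set (ℤ → A)) : Prop :=
  ∀ u : List A, WordIn X u → ∃ w : List A, WordIn X (u ++ w ++ u)

/-- A shift of finite type: defined by a finite set of forbidden words. -/
def IsSFT (X : Set (ℤ → A)) : Prop :=
  ∃ F : Finset (List A), X = {x : ℤ → A | ∀ w ∈ F, ∀ k : ℤ, ¬ OccursAt x k w}

/-- A (sliding block) code: a continuous shift-commuting map between shift spaces. -/
def IsCode [TopologicalSpace A] [TopologicalSpace B]
    {X : Set (ℤ → A)} {Y : Set (ℤ → B)} (φ : X → Y) : Prop :=
  Continuous φ ∧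
    ∀ (x : X) (hx : shiftMap (x : ℤ → A) ∈ X),
      ((φ ⟨shiftMap (x : ℤ → A), hx⟩ : Y) : ℤ → B) = shiftMap ((φ x : Y) : ℤ → B)

/-- A sofic shift: a factor of a shift of finite type. -/
def IsSofic [TopologicalSpace A] (Y : Set (ℤ → A)) : Prop :=
  ∃ (n : ℕ) (Z : Set (ℤ → Fin n)), IsSubshift Z ∧ IsSFT Z ∧
    ∃ ψ : Z → Y, IsCode ψ ∧ Function.Surjective ψ

/-- Two points are left asymptotic if they agree on all sufficiently negative coordinates. -/
def LeftAsymptotic (x y : ℤ → A) : Prop := ∃ N : ℤ, ∀ i ≤ N, x i = y i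

/-- Two points are right asymptotic if they agree on all sufficiently positive coordinates. -/
def RightAsymptotic (x y : ℤ → A) : Prop := ∃ N : ℤ, ∀ i, N ≤ i → x i = y i

/-- A code is right closing if it never collapses two distinct left asymptotic points. -/
def RightClosing {X : Set (ℤ → A)} {Y : Set (ℤ → B)} (φ : X → Y) : Prop :=
  ∀ x x' : X, LeftAsymptotic (x : ℤ → A) (x' : ℤ → A) → φ x = φ x' → x = x'

/-- A code is left closing if it never collapses two distinct right asymptotic points. -/
def LeftClosing {X : Set (ℤ → A)} {Y : Set (ℤ → B)} (φ : X → Y) : Prop :=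
  ∀ x x' : X, RightAsymptotic (x : ℤ → A) (x' : ℤ → A) → φ x = φ x' → x = x'

/-- Bi-closing: both right and left closing. -/
def BiClosing {X : Set (ℤ → A)} {Y : Set (ℤ → B)} (φ : X → Y) : Prop :=
  RightClosing φ ∧ LeftClosing φ

/-- Finite-to-one map. -/
def FiniteToOne {α β : Type*} (φ : α → β) : Prop := ∀ y : β, (φ ⁻¹' {y}).Finite

/-- Every fiber has exactly `d` elements. -/
def ExactlyDToOne {α β : Type*} (φ : α → β) (d : ℕ) : Prop :=
  ∀ y : β, (φ ⁻¹' {y}).Finite ∧ Nat.card (φ ⁻¹' {y}) = d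

/-- Constant-to-one map. -/
def ConstantToOne {α β : Type*} (φ : α → β) : Prop := ∃ d : ℕ, ExactlyDToOne φ d

/-- A doubly transitive point: every word of `Y` occurs infinitely often to the left
and to the right. -/
def DoublyTransitive (Y : Set (ℤ → A)) (y : ℤ → A) : Prop :=
  ∀ w : List A, WordIn Y w → ∀ N : ℤ,
    (∃ k ≥ N, OccursAt y k w) ∧ (∃ k ≤ N, OccursAt y k w)

/-- The maximal nonwandering subshift of `X`. -/
def OmegaSet [TopologicalSpace A] (X : Set (ℤ → A)) : Set (ℤ → A) :=
  ⋃₀ {Z : Set (ℤ → A) | Z ⊆ X ∧ IsSubshift Z ∧ NonwanderingSubshift Z}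

/-- Topological entropy of a subshift, via the growth rate of the number of words. -/
noncomputable def subshiftEntropy (X : Set (ℤ → A)) : ℝ :=
  Filter.limsup
    (fun n : ℕ => Real.log (Nat.card {w : List A | w.length = n ∧ WordIn X w}) / n)
    Filter.atTop

/-- An irreducible component of `X`: a maximal nonempty irreducible subshift of `X`. -/
def IsIrreducibleComponent [TopologicalSpace A] (X X₀ : Set (ℤ → A)) : Prop :=
  X₀ ⊆ X ∧ IsSubshift X₀ ∧ X₀.Nonempty ∧ IrreducibleSubshift X₀ ∧
    ∀ Z : Set (ℤ → A), Z ⊆ X → IsSubshift Z → IrreducibleSubshift Z → X₀ ⊆ Z → Z = X₀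

-- The metric on a shift space: `d(x,y) = 2^{-k}` where `k` is maximal with
-- `x` and `y` agreeing on `[-k,k]`, and `0` if `x = y`.
open Classical in
noncomputable def shiftDist (x y : ℤ → A) : ℝ :=
  if x = y then 0
  else (2 : ℝ) ^ (-((sSup {n : ℕ | ∀ i : ℤ, |i| ≤ (n : ℤ) → x i = y i} : ℕ) : ℤ))

/-!
Everything goes through one finitary property: some central block `x_[-N, N]` tells apart the
points of every fibre (`BlockInjOnFibers φ N`). For codes on subshifts this is equivalent to
being bi-closing: if no radius worked, a limit of ever longer agreeing pairs in one fibre,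
recentred at their first disagreement, would be two distinct points of one fibre asymptotic on
one side.

For `y'` near `y`, the `N`-blocks occurring in the fibre over `y'` occur in the fibre over `y`
(compactness), and if `φ` is open the converse holds too. Thus for an open code with
`BlockInjOnFibers φ N` the fibre cardinality is locally constant and shift-invariant, hence
constant on the irreducible `Y`. If instead all fibres have `d` points, the inclusion of block
sets is an equality, which lifts a point over `y` to a nearby point over `y'`: `φ` is open.
Finally, for an open `d`-to-one code the block sets over `y` and nearby `y'` coincide, so a
radius separating the fibre over `y` separates the nearby ones too, and compactness of `Y`
makes it uniform.
-/

open Topology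

section FiberImages

variable {X Y D : Type*} [TopologicalSpace X] [TopologicalSpace Y] [TopologicalSpace D]
  [DiscreteTopology D] {φ : X → Y} {g : X → D}

theorem eventually_image_fiber_subset [CompactSpace X] [T2Space Y] (hφ : Continuous φ)
    (hg : Continuous g) (y : Y) : ∀ᶠ y' in 𝓝 y, g '' (φ ⁻¹' {y'}) ⊆ g '' (φ ⁻¹' {y}) := by
  set K := g ⁻¹' (g '' (φ ⁻¹' {y}))ᶜ
  have hK : IsClosed (φ '' K) :=
    ((isClosed_discrete _).preimage hg).isCompact.image hφ |>.isClosed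
  have hy : y ∉ φ '' K := fun ⟨z, hzK, hz⟩ => hzK ⟨z, hz, rfl⟩
  filter_upwards [hK.isOpen_compl.mem_nhds hy] with y' hy'
  rintro _ ⟨z, hz, rfl⟩
  by_contra hzK
  exact hy' ⟨z, hzK, hz⟩

theorem IsOpenMap.eventually_image_fiber_supset [Finite D] (hφ : IsOpenMap φ)
    (hg : Continuous g) (y : Y) : ∀ᶠ y' in 𝓝 y, g '' (φ ⁻¹' {y}) ⊆ g '' (φ ⁻¹' {y'}) := by
  suffices ∀ d, ∀ᶠ y' in 𝓝 y, d ∈ g '' (φ ⁻¹' {y}) → d ∈ g '' (φ ⁻¹' {y'}) from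
    (eventually_all.2 this).mono fun _ h d => h d
  intro d
  by_cases hd : d ∈ g '' (φ ⁻¹' {y})
  · obtain ⟨z, hz, rfl⟩ := hd
    have hU : φ '' (g ⁻¹' {g z}) ∈ 𝓝 y :=
      (hφ _ ((isOpen_discrete _).preimage hg)).mem_nhds ⟨z, rfl, hz⟩
    filter_upwards [hU] with y' ⟨z', hz', hy'⟩ _
    exact ⟨z', hy', hz'⟩
  · exact Eventually.of_forall fun _ h => absurd h hd

end FiberImages

theorem IsCompact.exists_forall_of_monotone {Z : Type*} [TopologicalSpace Z] {K : Set Z}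
    (hK : IsCompact K) {P : ℕ → Z → Prop} (hP : Monotone P)
    (h : ∀ z ∈ K, ∃ m, ∀ᶠ z' in 𝓝 z, P m z') : ∃ m, ∀ z ∈ K, P m z := by
  obtain ⟨m, hm⟩ := hK.elim_directed_cover (fun m => interior {z | P m z})
    (fun _ => isOpen_interior)
    (fun z hz => mem_iUnion.2 ((h z hz).imp fun _ => mem_interior_iff_mem_nhds.2))
    (Monotone.directed_le fun _ _ hmn => interior_mono fun z => hP hmn z)
  exact ⟨m, fun z hz => interior_subset (hm hz)⟩

theorem Set.eq_image_of_image_subset_of_injOn {α β : Type*} {f : α → β} {s t : Set α}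
    (hs : s.Finite) (ht : InjOn f t) (hts : f '' t ⊆ f '' s) (hcard : s.ncard ≤ t.ncard) :
    f '' t = f '' s :=
  eq_of_subset_of_ncard_le hts (by rw [ht.ncard_image]; exact (ncard_image_le hs).trans hcard)
    (hs.image f)

section Blocks

def centralBlock (m : ℕ) (x : ℤ → A) : Icc (-(m : ℤ)) m → A := fun i => x i

theorem centralBlock_eq_iff {m : ℕ} {x x' : ℤ → A} :
    centralBlock m x = centralBlock m x' ↔ EqOn x x' (Icc (-(m : ℤ)) m) :=
  ⟨fun h i hi => congrFun h ⟨i, hi⟩, fun h => funext fun i => h i.2⟩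

theorem centralBlock_eq_of_le {m n : ℕ} (hmn : m ≤ n) {x x' : ℤ → A}
    (h : centralBlock n x = centralBlock n x') : centralBlock m x = centralBlock m x' :=
  centralBlock_eq_iff.2 <| (centralBlock_eq_iff.1 h).mono <| Icc_subset_Icc (by omega) (by omega)

theorem injOn_centralBlock_mono {X : Type*} (f : X → ℤ → A) (S : Set X) :
    Monotone fun m => InjOn (fun x => centralBlock m (f x)) S :=
  fun _ _ hmn h _ hx _ hx' hxx' => h hx hx' (centralBlock_eq_of_le hmn hxx')

theorem Set.Finite.exists_injOn_centralBlock {X : Type*} {f : X → ℤ → A} (hf : Injective f)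
    {S : Set X} (hS : S.Finite) : ∃ m, InjOn (fun x => centralBlock m (f x)) S := by
  suffices ∀ᶠ m in atTop, ∀ p ∈ S ×ˢ S,
      centralBlock m (f p.1) = centralBlock m (f p.2) → p.1 = p.2 from
    this.exists.imp fun _ h x hx x' hx' => h (x, x') ⟨hx, hx'⟩
  refine (eventually_all_finite (hS.prod hS)).2 fun ⟨x, x'⟩ _ => ?_
  by_cases hxx' : x = x'
  · exact Eventually.of_forall fun _ _ => hxx'
  obtain ⟨i, hi⟩ := Function.ne_iff.1 (hf.ne hxx')
  filter_upwards [eventually_ge_atTop i.natAbs] with m hm h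
  exact absurd (centralBlock_eq_iff.1 h ⟨by omega, by omega⟩) hi

variable [TopologicalSpace A]

theorem Continuous.centralBlock {α : Type*} [TopologicalSpace α] {f : α → ℤ → A}
    (hf : Continuous f) (m : ℕ) : Continuous fun a => centralBlock m (f a) :=
  continuous_pi fun _ => (continuous_apply _).comp hf

theorem exists_centralBlock_subset {X : Set (ℤ → A)} {x : X} {s : Set X} (hs : s ∈ 𝓝 x) :
    ∃ m : ℕ, ∀ z : X, centralBlock m z = centralBlock m x.1 → z ∈ s := by
  obtain ⟨u, hu, hus⟩ := (mem_nhds_subtype X x s).1 hs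
  rw [nhds_pi, Filter.mem_pi] at hu
  obtain ⟨I, hI, t, ht, hIt⟩ := hu
  obtain ⟨m, hm⟩ : ∃ m : ℕ, I ⊆ Icc (-(m : ℤ)) m := by
    obtain ⟨a, ha⟩ := hI.bddAbove
    obtain ⟨b, hb⟩ := hI.bddBelow
    exact ⟨max a.toNat (-b).toNat, fun i hi => ⟨by have := hb hi; omega, by have := ha hi; omega⟩⟩
  refine ⟨m, fun z hz => hus (hIt fun i hi => ?_)⟩
  rw [show (z : ℤ → A) i = x.1 i from centralBlock_eq_iff.1 hz (hm hi)]
  exact mem_of_mem_nhds (ht i)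

end Blocks

section Shift

def shiftBy (k : ℤ) (x : ℤ → A) : ℤ → A := fun i => x (i + k)

@[simp] theorem shiftBy_apply (k : ℤ) (x : ℤ → A) (i : ℤ) : shiftBy k x i = x (i + k) := rfl

@[simp] theorem shiftBy_zero (x : ℤ → A) : shiftBy 0 x = x := funext fun _ => by simp

@[simp] theorem shiftBy_shiftBy (k l : ℤ) (x : ℤ → A) :
    shiftBy k (shiftBy l x) = shiftBy (k + l) x :=
  funext fun _ => by simp [add_assoc]

theorem shiftMap_eq_shiftBy_one (x : ℤ → A) : shiftMap x = shiftBy 1 x := rfl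

variable [TopologicalSpace A] [TopologicalSpace B] {X : Set (ℤ → A)} {Y : Set (ℤ → B)}

theorem IsSubshift.compactSpace [Finite A] (hX : IsSubshift X) : CompactSpace X :=
  isCompact_iff_compactSpace.1 hX.1.isCompact

theorem IsSubshift.shiftBy_mem (hX : IsSubshift X) (k : ℤ) {x : ℤ → A} (hx : x ∈ X) :
    shiftBy k x ∈ X := by
  induction k using Int.induction_on with
  | zero => rwa [shiftBy_zero]
  | succ k ih =>
    rw [← hX.2, add_comm, ← shiftBy_shiftBy, ← shiftMap_eq_shiftBy_one]
    exact mem_image_of_mem _ ih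
  | pred k ih =>
    rw [← hX.2] at ih
    obtain ⟨w, hw, hwk⟩ := ih
    rwa [sub_eq_neg_add, ← shiftBy_shiftBy, ← hwk, shiftMap_eq_shiftBy_one, shiftBy_shiftBy,
      neg_add_cancel, shiftBy_zero]

def IsSubshift.shiftEquiv (hX : IsSubshift X) (k : ℤ) : X ≃ X where
  toFun x := ⟨shiftBy k x, hX.shiftBy_mem k x.2⟩
  invFun x := ⟨shiftBy (-k) x, hX.shiftBy_mem (-k) x.2⟩
  left_inv x := by ext1; simp
  right_inv x := by ext1; simp

@[simp] theorem IsSubshift.coe_shiftEquiv (hX : IsSubshift X) (k : ℤ) (x : X) :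
    (hX.shiftEquiv k x : ℤ → A) = shiftBy k x := rfl

theorem IsSubshift.shiftEquiv_zero (hX : IsSubshift X) (x : X) : hX.shiftEquiv 0 x = x := by
  ext1; simp

theorem IsSubshift.shiftEquiv_add (hX : IsSubshift X) (k l : ℤ) (x : X) :
    hX.shiftEquiv (k + l) x = hX.shiftEquiv k (hX.shiftEquiv l x) := by
  ext1; simp

theorem IsCode.map_shiftEquiv (hX : IsSubshift X) (hY : IsSubshift Y) {φ : X → Y}
    (hφ : IsCode φ) (k : ℤ) (x : X) : φ (hX.shiftEquiv k x) = hY.shiftEquiv k (φ x) := by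
  have h₁ : ∀ x, φ (hX.shiftEquiv 1 x) = hY.shiftEquiv 1 (φ x) := fun x =>
    Subtype.ext (hφ.2 x (hX.shiftBy_mem 1 x.2))
  induction k using Int.induction_on generalizing x with
  | zero => rw [hX.shiftEquiv_zero, hY.shiftEquiv_zero]
  | succ k ih => rw [add_comm, hX.shiftEquiv_add, hY.shiftEquiv_add, h₁, ih]
  | pred k ih =>
    apply (hY.shiftEquiv 1).injective
    rw [← h₁, ← hX.shiftEquiv_add, ← hY.shiftEquiv_add, add_sub_cancel, ih]

theorem IsCode.card_fiber_shiftEquiv (hX : IsSubshift X) (hY : IsSubshift Y) {φ : X → Y}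
    (hφ : IsCode φ) (k : ℤ) (y : Y) :
    Nat.card (φ ⁻¹' {hY.shiftEquiv k y}) = Nat.card (φ ⁻¹' {y}) :=
  Nat.card_congr <| ((hX.shiftEquiv k).subtypeEquiv fun x => by
    simp [hφ.map_shiftEquiv hX hY, (hY.shiftEquiv k).injective.eq_iff]).symm

end Shift

section Irreducible

def blockWord (m : ℕ) (y : ℤ → B) : List B := List.ofFn fun t : Fin (2 * m + 1) => y (t - m)

theorem occursAt_blockWord (m : ℕ) (y : ℤ → B) : OccursAt y (-m) (blockWord m y) := fun i => by
  rw [List.get_eq_getElem]; simp only [blockWord, List.getElem_ofFn]; ring_nf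

theorem OccursAt.append_left {x : ℤ → B} {k : ℤ} {u v : List B} (h : OccursAt x k (u ++ v)) :
    OccursAt x k u := fun i => by
  simpa [List.getElem_append_left i.2] using h ⟨i, by simp; omega⟩

theorem OccursAt.append_right {x : ℤ → B} {k : ℤ} {u v : List B} (h : OccursAt x k (u ++ v)) :
    OccursAt x (k + u.length) v := fun i => by
  simpa [add_assoc, add_comm (i : ℤ)] using h ⟨u.length + i, by simp⟩

theorem OccursAt.centralBlock_shiftBy_eq {z y : ℤ → B} {k : ℤ} {m : ℕ}
    (h : OccursAt z k (blockWord m y)) : centralBlock m (shiftBy (k + m) z) = centralBlock m y := by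
  refine centralBlock_eq_iff.2 fun i ⟨hi₁, hi₂⟩ => ?_
  have := h ⟨(i + m).toNat, by simp [blockWord]; omega⟩
  simp only [blockWord, List.get_eq_getElem, List.getElem_ofFn] at this
  rw [shiftBy_apply, show i + (k + m) = k + (i + m).toNat by omega, this]
  congr 1; omega

theorem IrreducibleSubshift.exists_shiftBy_centralBlock_eq {Y : Set (ℤ → B)}
    (hY : IrreducibleSubshift Y) {y₁ y₂ : ℤ → B} (h₁ : y₁ ∈ Y) (h₂ : y₂ ∈ Y) (m₁ m₂ : ℕ) :
    ∃ z ∈ Y, ∃ k₁ k₂ : ℤ, centralBlock m₁ (shiftBy k₁ z) = centralBlock m₁ y₁ ∧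
      centralBlock m₂ (shiftBy k₂ z) = centralBlock m₂ y₂ := by
  obtain ⟨w, z, hz, k, hk⟩ := hY _ _ ⟨y₁, h₁, _, occursAt_blockWord m₁ y₁⟩
    ⟨y₂, h₂, _, occursAt_blockWord m₂ y₂⟩
  exact ⟨z, hz, _, _, hk.append_left.append_left.centralBlock_shiftBy_eq,
    hk.append_right.centralBlock_shiftBy_eq⟩

theorem IrreducibleSubshift.eq_of_shift_invariant [TopologicalSpace B] {Y : Set (ℤ → B)}
    (hY : IsSubshift Y) (hirr : IrreducibleSubshift Y) {α : Type*} {c : Y → α}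
    (hc : ∀ y, ∀ᶠ y' in 𝓝 y, c y' = c y) (hshift : ∀ k y, c (hY.shiftEquiv k y) = c y)
    (y₁ y₂ : Y) : c y₁ = c y₂ := by
  obtain ⟨m₁, hm₁⟩ := exists_centralBlock_subset (hc y₁)
  obtain ⟨m₂, hm₂⟩ := exists_centralBlock_subset (hc y₂)
  obtain ⟨z, hz, k₁, k₂, hk₁, hk₂⟩ := hirr.exists_shiftBy_centralBlock_eq y₁.2 y₂.2 m₁ m₂
  calc c y₁ = c (hY.shiftEquiv k₁ ⟨z, hz⟩) := (hm₁ _ hk₁).symm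
    _ = c (hY.shiftEquiv k₂ ⟨z, hz⟩) := by rw [hshift, hshift]
    _ = c y₂ := hm₂ _ hk₂

end Irreducible

theorem Int.forall_of_window {p : ℤ → Prop} {N : ℕ} (hbase : ∀ i ∈ Icc (-(N : ℤ)) N, p i)
    (hup : ∀ k : ℤ, (∀ j ∈ Ico (k - N) k, p j) → p k)
    (hdown : ∀ k : ℤ, (∀ j ∈ Ioc k (k + N), p j) → p k) (k : ℤ) : p k := by
  have hpos : ∀ n : ℕ, p n := fun n => by
    induction n using Nat.strong_induction_on with
    | _ n ih =>
      by_cases hn : n ≤ N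
      · exact hbase n ⟨by omega, by omega⟩
      refine hup n fun (j : ℤ) ⟨hj₁, hj₂⟩ => ?_
      lift j to ℕ using (by omega)
      exact ih j (by omega)
  have hneg : ∀ n : ℕ, p (-n) := fun n => by
    induction n using Nat.strong_induction_on with
    | _ n ih =>
      by_cases hn : n ≤ N
      · exact hbase (-n) ⟨by omega, by omega⟩
      refine hdown (-n) fun (j : ℤ) ⟨hj₁, hj₂⟩ => ?_
      obtain ⟨j, rfl⟩ : ∃ j' : ℕ, j = -j' := ⟨(-j).toNat, by omega⟩
      exact ih j (by omega)
  obtain ⟨n, rfl | rfl⟩ := k.eq_nat_or_neg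
  exacts [hpos n, hneg n]

section Separation

variable {X : Set (ℤ → A)} {Y : Set (ℤ → B)}

def BlockInjOnFibers (φ : X → Y) (N : ℕ) : Prop :=
  ∀ y, InjOn (fun x : X => centralBlock N x.1) (φ ⁻¹' {y})

theorem BlockInjOnFibers.finite_fiber [Finite A] {φ : X → Y} {N : ℕ}
    (hN : BlockInjOnFibers φ N) (y : Y) : (φ ⁻¹' {y}).Finite :=
  Finite.of_finite_image (toFinite _) (hN y)

variable [TopologicalSpace A] [TopologicalSpace B] {φ : X → Y}

theorem exists_Icc_window_of_eqOn_imp [Finite A] [DiscreteTopology A] [T2Space B]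
    (hX : IsSubshift X) (hφ : Continuous φ) {S : Set ℤ}
    (h : ∀ x x' : X, φ x = φ x' → EqOn x.1 x'.1 S → x.1 0 = x'.1 0) :
    ∃ N : ℕ, ∀ x x' : X, φ x = φ x' → EqOn x.1 x'.1 (S ∩ Icc (-(N : ℤ)) N) → x.1 0 = x'.1 0 := by
  have := hX.compactSpace
  have hfst (i : ℤ) : Continuous fun p : X × X => p.1.1 i :=
    (continuous_apply i).comp (continuous_subtype_val.comp continuous_fst)
  have hsnd (i : ℤ) : Continuous fun p : X × X => p.2.1 i :=
    (continuous_apply i).comp (continuous_subtype_val.comp continuous_snd)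
  have hK : IsCompact {p : X × X | φ p.1 = φ p.2 ∧ p.1.1 0 ≠ p.2.1 0} :=
    ((isClosed_eq (f := fun p : X × X => φ p.1) (by fun_prop) (by fun_prop)).inter
      ((isClosed_discrete {q : A × A | q.1 ≠ q.2}).preimage
        (f := fun p : X × X => (p.1.1 0, p.2.1 0)) ((hfst 0).prodMk (hsnd 0)))).isCompact
  obtain ⟨N, hN⟩ := hK.exists_forall_of_monotone
    (P := fun N p => ∃ i ∈ S ∩ Icc (-(N : ℤ)) N, p.1.1 i ≠ p.2.1 i)
    (fun N M hNM p ⟨i, ⟨hiS, hi₁, hi₂⟩, hne⟩ => ⟨i, ⟨hiS, by omega, by omega⟩, hne⟩)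
    (fun p ⟨hp, hp₀⟩ => by
      obtain ⟨i, hiS, hne⟩ : ∃ i ∈ S, p.1.1 i ≠ p.2.1 i := by
        by_contra! hS
        exact hp₀ (h _ _ hp hS)
      refine ⟨i.natAbs, ?_⟩
      filter_upwards [(isOpen_ne_fun (hfst i) (hsnd i)).mem_nhds hne] with q hq
      exact ⟨i, ⟨hiS, by omega, by omega⟩, hq⟩)
  refine ⟨N, fun x x' hxx' hS => by_contra fun h₀ => ?_⟩
  obtain ⟨i, hi, hne⟩ := hN (x, x') ⟨hxx', h₀⟩
  exact hne (hS hi)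

theorem BiClosing.exists_blockInjOnFibers [Finite A] [DiscreteTopology A] [T2Space B]
    (hX : IsSubshift X) (hY : IsSubshift Y) (hφ : IsCode φ) (h : BiClosing φ) :
    ∃ N, BlockInjOnFibers φ N := by
  obtain ⟨N₁, hN₁⟩ := exists_Icc_window_of_eqOn_imp hX hφ.1 (S := Iio 0)
    fun x x' hxx' hS => by rw [h.1 x x' ⟨-1, fun i hi => hS (by simp; omega)⟩ hxx']
  obtain ⟨N₂, hN₂⟩ := exists_Icc_window_of_eqOn_imp hX hφ.1 (S := Ioi 0)
    fun x x' hxx' hS => by rw [h.2 x x' ⟨1, fun i hi => hS (by simp; omega)⟩ hxx']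
  refine ⟨max N₁ N₂, fun y x hx x' hx' hxx' =>
    Subtype.ext <| funext <| Int.forall_of_window (centralBlock_eq_iff.1 hxx') ?_ ?_⟩
  all_goals
    intro k hk
    have hφk : φ (hX.shiftEquiv k x) = φ (hX.shiftEquiv k x') := by
      rw [hφ.map_shiftEquiv hX hY, hφ.map_shiftEquiv hX hY, hx, hx']
  · simpa using hN₁ _ _ hφk fun j ⟨hj, hj₁, _⟩ => by
      simpa using hk (j + k) ⟨by simp at hj; omega, by simp at hj; omega⟩
  · simpa using hN₂ _ _ hφk fun j ⟨hj, _, hj₂⟩ => by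
      simpa using hk (j + k) ⟨by simp at hj; omega, by simp at hj; omega⟩

theorem BlockInjOnFibers.eq_of_eqOn_Icc (hX : IsSubshift X) (hY : IsSubshift Y)
    (hφ : IsCode φ) {N : ℕ} (hN : BlockInjOnFibers φ N) {x x' : X} (hxx' : φ x = φ x') (k : ℤ)
    (h : EqOn x.1 x'.1 (Icc (k - N) (k + N))) : x = x' :=
  (hX.shiftEquiv k).injective <| hN (φ (hX.shiftEquiv k x'))
    (by simp [hφ.map_shiftEquiv hX hY, hxx']) rfl
    (centralBlock_eq_iff.2 fun i ⟨hi₁, hi₂⟩ => h ⟨by omega, by omega⟩)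

theorem BlockInjOnFibers.biClosing (hX : IsSubshift X) (hY : IsSubshift Y) (hφ : IsCode φ)
    {N : ℕ} (hN : BlockInjOnFibers φ N) : BiClosing φ :=
  ⟨fun _ _ ⟨M, hM⟩ hxx' => hN.eq_of_eqOn_Icc hX hY hφ hxx' (M - N) fun i hi => hM i (by
      have := hi.2; omega),
    fun _ _ ⟨M, hM⟩ hxx' => hN.eq_of_eqOn_Icc hX hY hφ hxx' (M + N) fun i hi => hM i (by
      have := hi.1; omega)⟩

end Separation

section FiberCardinality

variable [Finite A] [TopologicalSpace A] [DiscreteTopology A] [TopologicalSpace B]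
  {X : Set (ℤ → A)} {Y : Set (ℤ → B)} {φ : X → Y}

theorem exists_blockInjOnFibers_of_isOpenMap [Finite B] [T2Space B] (hX : IsSubshift X)
    (hY : IsSubshift Y) (hφ : Continuous φ) (ho : IsOpenMap φ) (hc : ConstantToOne φ) :
    ∃ N, BlockInjOnFibers φ N := by
  have := hX.compactSpace
  have := hY.compactSpace
  obtain ⟨d, hd⟩ := hc
  have hcard (y : Y) : (φ ⁻¹' {y}).ncard = d := by rw [← Nat.card_coe_set_eq, (hd y).2]
  obtain ⟨N, hN⟩ := isCompact_univ.exists_forall_of_monotone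
    (P := fun m y => InjOn (fun x : X => centralBlock m x.1) (φ ⁻¹' {y}))
    (fun _ _ hmn y => injOn_centralBlock_mono _ _ hmn) fun y _ => by
      obtain ⟨m, hm⟩ := (hd y).1.exists_injOn_centralBlock Subtype.val_injective
      refine ⟨m, ?_⟩
      filter_upwards [eventually_image_fiber_subset hφ (continuous_subtype_val.centralBlock m) y,
        ho.eventually_image_fiber_supset (continuous_subtype_val.centralBlock m) y] with y' h₁ h₂
      exact injOn_of_ncard_image_eq (by rw [h₁.antisymm h₂, hm.ncard_image, hcard, hcard])
        (hd y').1
  exact ⟨N, fun y => hN y trivial⟩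

theorem BlockInjOnFibers.eventually_card_fiber_eq [T2Space B] (hX : IsSubshift X)
    (hφ : Continuous φ) (ho : IsOpenMap φ) {N : ℕ} (hN : BlockInjOnFibers φ N) (y : Y) :
    ∀ᶠ y' in 𝓝 y, Nat.card (φ ⁻¹' {y'}) = Nat.card (φ ⁻¹' {y}) := by
  have := hX.compactSpace
  filter_upwards [eventually_image_fiber_subset hφ (continuous_subtype_val.centralBlock N) y,
    ho.eventually_image_fiber_supset (continuous_subtype_val.centralBlock N) y] with y' h₁ h₂
  rw [Nat.card_coe_set_eq, Nat.card_coe_set_eq, ← (hN y').ncard_image, ← (hN y).ncard_image,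
    h₁.antisymm h₂]

theorem BlockInjOnFibers.constantToOne [T2Space B] (hX : IsSubshift X) (hY : IsSubshift Y)
    (hφ : IsCode φ) (hirr : IrreducibleSubshift Y) (ho : IsOpenMap φ) {N : ℕ}
    (hN : BlockInjOnFibers φ N) : ConstantToOne φ := by
  rcases isEmpty_or_nonempty Y with hY₀ | hY₀
  · exact ⟨0, hY₀.elim⟩
  obtain ⟨y₀⟩ := hY₀
  refine ⟨Nat.card (φ ⁻¹' {y₀}), fun y => ⟨hN.finite_fiber y, ?_⟩⟩
  exact hirr.eq_of_shift_invariant hY (c := fun y => Nat.card (φ ⁻¹' {y}))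
    (hN.eventually_card_fiber_eq hX hφ.1 ho) (hφ.card_fiber_shiftEquiv hX hY) y y₀

theorem BlockInjOnFibers.isOpenMap [T2Space B] (hX : IsSubshift X) (hφ : Continuous φ)
    (hc : ConstantToOne φ) {N : ℕ} (hN : BlockInjOnFibers φ N) : IsOpenMap φ := by
  have := hX.compactSpace
  obtain ⟨d, hd⟩ := hc
  refine fun U hU => isOpen_iff_mem_nhds.2 ?_
  rintro _ ⟨x, hx, rfl⟩
  obtain ⟨m, hm⟩ := exists_centralBlock_subset (hU.mem_nhds hx)
  set g := fun z : X => centralBlock (max m N) z.1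
  filter_upwards [eventually_image_fiber_subset hφ (continuous_subtype_val.centralBlock _) (φ x)]
    with y hy
  have himage : g '' (φ ⁻¹' {y}) = g '' (φ ⁻¹' {φ x}) :=
    eq_image_of_image_subset_of_injOn (hd _).1
      (injOn_centralBlock_mono _ _ (le_max_right m N) (hN y)) hy
      (by rw [← Nat.card_coe_set_eq, ← Nat.card_coe_set_eq, (hd _).2, (hd _).2])
  obtain ⟨z, hz, hzx⟩ := himage ▸ mem_image_of_mem g (show x ∈ φ ⁻¹' {φ x} from rfl)
  exact ⟨z, hm z (centralBlock_eq_of_le (le_max_left m N) hzx), hz⟩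

end FiberCardinality

theorem main_two_imply_third_general {A : Type*} {B : Type*} [Finite A] [TopologicalSpace A] [DiscreteTopology A]
    [Finite B] [TopologicalSpace B] [DiscreteTopology B]
    {X : Set (ℤ → A)} {Y : Set (ℤ → B)} (hX : IsSubshift X) (hY : IsSubshift Y)
    (φ : X → Y) (hφ : IsCode φ)
    (hYirr : IrreducibleSubshift Y) :
    (IsOpenMap φ → ConstantToOne φ → BiClosing φ) ∧
    (IsOpenMap φ → BiClosing φ → ConstantToOne φ) ∧
    (ConstantToOne φ → BiClosing φ → IsOpenMap φ) := by
  refine ⟨fun ho hc => ?_, fun ho hbc => ?_, fun hc hbc => ?_⟩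
  · obtain ⟨N, hN⟩ := exists_blockInjOnFibers_of_isOpenMap hX hY hφ.1 ho hc
    exact hN.biClosing hX hY hφ
  · obtain ⟨N, hN⟩ := hbc.exists_blockInjOnFibers hX hY hφ
    exact hN.constantToOne hX hY hφ hYirr ho
  · obtain ⟨N, hN⟩ := hbc.exists_blockInjOnFibers hX hY hφ
    exact hN.isOpenMap hX hφ.1 hc
end

section
/- Let φ : X → Y be a d-to-1 code between shift spaces (every fiber has exactly d points). Then the following are equivalent: (1) φ is open; (2) φ is bi-closing; (3) φ has d disjoint continuous cross sections f₁,…,f_d : Y → X with X equal to the union of their images; (4) for every x ∈ X there exists a continuous cross section f : Y → X with x ∈ f(Y). -/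
open Set Function Filter

variable {A : Type*} {B : Type*} {C : Type*}

/-
Everything except the link with bi-closing is general topology of a continuous `d`-to-one map
`φ : X → Y` between compact Hausdorff totally disconnected spaces. If `φ` is open, the `d` points
of a fiber have disjoint clopen neighbourhoods whose images are neighbourhoods of the base point,
and counting shows that each of them is a sheet mapped bijectively onto a clopen neighbourhood;
compactness glues finitely many such local trivializations, and the inverses of the sheets are
the sections. Disjoint covering sections have clopen ranges, so `φ` is locally injective, and a
locally injective `d`-to-one map is open: near `φ x₀` the `d` points of a fiber lie in the `d`
injectivity neighbourhoods of the fiber of `φ x₀`, at most one in each, hence one in each.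
For codes, compactness makes local injectivity uniform (injectivity on cylinders of a fixed
radius), and shifting turns this into bi-closing. Conversely, by compactness a right (left)
closing code determines each coordinate from a fixed window to its left (right), so agreement
of two points with the same image on a central window spreads in both directions.
-/

open Topology

section Counting

variable {ι β : Type*} {P : ι → Set β} {t : Set β}

theorem subset_iUnion_and_subsingleton_inter_of_nonempty_inter [Finite t]
    (hcard : Nat.card t ≤ Nat.card ι) (hP : Pairwise (Disjoint on P))
    (hmeet : ∀ i, (P i ∩ t).Nonempty) :
    t ⊆ ⋃ i, P i ∧ ∀ i, (P i ∩ t).Subsingleton := by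
  choose q hq using hmeet
  have hinj : Injective fun i => (⟨q i, (hq i).2⟩ : t) := fun i j hij => by
    have hij' : q i = q j := Subtype.ext_iff.mp hij
    exact hP.eq (not_disjoint_iff.mpr ⟨q j, hij' ▸ (hq i).1, (hq j).1⟩)
  have hq_surj : ∀ z ∈ t, ∃ i, q i = z := fun z hz =>
    ((hinj.bijective_of_nat_card_le hcard).2 ⟨z, hz⟩).imp fun _ h => congrArg Subtype.val h
  have hindex : ∀ {i j}, q j ∈ P i → j = i := fun hj =>
    hP.eq (not_disjoint_iff.mpr ⟨_, (hq _).1, hj⟩)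
  refine ⟨fun z hz => ?_, fun i a ha b hb => ?_⟩
  · obtain ⟨i, rfl⟩ := hq_surj z hz
    exact mem_iUnion.mpr ⟨i, (hq i).1⟩
  · obtain ⟨j, rfl⟩ := hq_surj a ha.2
    obtain ⟨k, rfl⟩ := hq_surj b hb.2
    rw [hindex ha.1, hindex hb.1]

theorem nonempty_inter_of_subsingleton_inter [Finite ι] (hcard : Nat.card ι ≤ Nat.card t)
    (hcover : t ⊆ ⋃ i, P i) (hsub : ∀ i, (P i ∩ t).Subsingleton) (i : ι) :
    (P i ∩ t).Nonempty := by
  choose g hg using fun z : t => mem_iUnion.mp (hcover z.2)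
  have hinj : Injective g := fun z z' h =>
    Subtype.ext (hsub (g z) ⟨hg z, z.2⟩ ⟨h ▸ hg z', z'.2⟩)
  obtain ⟨z, rfl⟩ := (hinj.bijective_of_nat_card_le hcard).2 i
  exact ⟨z, hg z, z.2⟩

end Counting

section LocalInjectivity

variable {X Y : Type*} [TopologicalSpace X] [TopologicalSpace Y] {φ : X → Y} {d : ℕ}

theorem isOpenMap_of_forall_mem_range_section
    (h : ∀ x, ∃ f : Y → X, Continuous f ∧ (∀ y, φ (f y) = y) ∧ x ∈ range f) :
    IsOpenMap φ := by
  intro U hU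
  refine isOpen_iff_forall_mem_open.mpr ?_
  rintro _ ⟨x, hxU, rfl⟩
  obtain ⟨f, hf, hsec, y, rfl⟩ := h x
  exact ⟨f ⁻¹' U, fun y' hy' => ⟨f y', hy', hsec y'⟩, hU.preimage hf, by rwa [mem_preimage, hsec]⟩

theorem isLocallyInjective_of_sections [T2Space X] [CompactSpace Y] {ι : Type*} [Finite ι]
    {f : ι → Y → X} (hf : ∀ i, Continuous (f i)) (hsec : ∀ i y, φ (f i y) = y)
    (hdisj : Pairwise (Disjoint on fun i => range (f i))) (hcover : ⋃ i, range (f i) = univ) :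
    IsLocallyInjective φ := by
  have hmem : ∀ x, ∃ i, x ∈ range (f i) := fun x => mem_iUnion.mp (hcover ▸ mem_univ x)
  intro x
  obtain ⟨i, hi⟩ := hmem x
  refine ⟨range (f i), ?_, hi, ?_⟩
  · have hcompl : (range (f i))ᶜ = ⋃ j ∈ ({i}ᶜ : Set ι), range (f j) := by
      ext z
      simp only [mem_compl_iff, mem_iUnion, mem_singleton_iff, exists_prop]
      refine ⟨fun hz => ?_, fun ⟨j, hji, hzj⟩ hzi => (hdisj hji).ne_of_mem hzj hzi rfl⟩
      obtain ⟨j, hj⟩ := hmem z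
      exact ⟨j, fun hji => hz (hji ▸ hj), hj⟩
    rw [← isClosed_compl_iff, hcompl]
    exact (toFinite _).isClosed_biUnion fun j _ => (isCompact_range (hf j)).isClosed
  · rintro _ ⟨y, rfl⟩ _ ⟨y', rfl⟩ h
    rw [hsec, hsec] at h
    rw [h]

theorem IsLocallyInjective.isOpenMap [CompactSpace X] [T2Space Y] (hli : IsLocallyInjective φ)
    (hφ : Continuous φ) (hd : ExactlyDToOne φ d) : IsOpenMap φ := by
  intro U hU
  refine isOpen_iff_forall_mem_open.mpr ?_
  rintro _ ⟨x₀, hx₀U, rfl⟩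
  have hloc : ∀ x, ∃ V, IsOpen V ∧ x ∈ V ∧ InjOn φ V ∧ (x = x₀ → V ⊆ U) := by
    intro x
    obtain ⟨V, hV, hxV, hinj⟩ := hli x
    by_cases hx : x = x₀
    · subst hx
      exact ⟨V ∩ U, hV.inter hU, ⟨hxV, hx₀U⟩, hinj.mono inter_subset_left,
        fun _ => inter_subset_right⟩
    · exact ⟨V, hV, hxV, hinj, fun h => absurd h hx⟩
  choose V hV hxV hinj hVU using hloc
  have := (hd (φ x₀)).1.to_subtype
  -- Over `y ∉ φ '' K` every fiber point lies in some `V x` with `x` in the fiber of `φ x₀`;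
  -- each `V x` holds at most one of them, so counting puts one into `V x₀ ⊆ U`.
  let K := (⋃ x : φ ⁻¹' {φ x₀}, V x)ᶜ
  have hK : IsClosed (φ '' K) :=
    ((isOpen_iUnion fun x : φ ⁻¹' {φ x₀} => hV x).isClosed_compl.isCompact.image hφ).isClosed
  refine ⟨(φ '' K)ᶜ, fun y hy => ?_, hK.isOpen_compl,
    fun ⟨z, hz, hzx⟩ => hz (mem_iUnion.mpr ⟨⟨z, hzx⟩, hxV z⟩)⟩
  have := (hd y).1.to_subtype
  obtain ⟨z, hz, hzy⟩ := nonempty_inter_of_subsingleton_inter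
    (P := fun x : φ ⁻¹' {φ x₀} => V x) (t := φ ⁻¹' {y})
    (by rw [(hd y).2, (hd _).2]) (fun z hz => by_contra fun h => hy ⟨z, h, hz⟩)
    (fun x _ ha _ hb => hinj x ha.1 hb.1 (ha.2.trans hb.2.symm)) ⟨x₀, rfl⟩
  exact ⟨z, hVU x₀ rfl hz, hzy⟩

theorem IsLocallyInjective.isClosed_setOf_eq_and_ne [T2Space Y] (hli : IsLocallyInjective φ)
    (hφ : Continuous φ) : IsClosed {q : X × X | φ q.1 = φ q.2 ∧ q.1 ≠ q.2} := by
  refine isOpen_compl_iff.mp (isOpen_iff_mem_nhds.mpr ?_)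
  rintro ⟨x, x'⟩ hq
  simp only [mem_compl_iff, mem_ofPred_eq, not_and, not_not] at hq
  by_cases h : φ x = φ x'
  · obtain rfl := hq h
    obtain ⟨U, hU, hxU, hinj⟩ := hli x
    filter_upwards [prod_mem_nhds (hU.mem_nhds hxU) (hU.mem_nhds hxU)] with q hqU hqE
    exact hqE.2 (hinj hqU.1 hqU.2 hqE.1)
  · filter_upwards [(isOpen_ne_fun (hφ.comp continuous_fst) (hφ.comp continuous_snd)).mem_nhds h]
      with q hq' hqE
    exact hq' hqE.1

end LocalInjectivity

section Sheets

variable {X Y : Type*} [TopologicalSpace X] {φ : X → Y} {d : ℕ}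

def HasSheetsOver (φ : X → Y) (d : ℕ) (V : Set Y) : Prop :=
  ∃ R : Fin d → Set X, (∀ i, IsClosed (R i)) ∧ Pairwise (Disjoint on R) ∧ ∀ i, BijOn φ (R i) V

theorem hasSheetsOver_empty : HasSheetsOver φ d ∅ :=
  ⟨fun _ => ∅, fun _ => isClosed_empty, fun _ _ _ => disjoint_bot_left, fun _ => bijOn_empty φ⟩

theorem HasSheetsOver.union {V W : Set Y} (hV : HasSheetsOver φ d V) (hW : HasSheetsOver φ d W)
    (hVW : Disjoint V W) : HasSheetsOver φ d (V ∪ W) := by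
  obtain ⟨R, hR, hRdisj, hRbij⟩ := hV
  obtain ⟨S, hS, hSdisj, hSbij⟩ := hW
  have hRS : ∀ i j, Disjoint (R i) (S j) := fun i j =>
    (hVW.preimage φ).mono (hRbij i).mapsTo.subset_preimage (hSbij j).mapsTo.subset_preimage
  refine ⟨fun i => R i ∪ S i, fun i => (hR i).union (hS i), fun i j hij => ?_, fun i => ?_⟩
  · exact (disjoint_union_right.mpr ⟨hRdisj hij, hRS i j⟩).union_left
      (disjoint_union_right.mpr ⟨(hRS j i).symm, hSdisj hij⟩)
  · refine (hRbij i).union (hSbij i) ((injOn_union (hRS i i)).mpr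
      ⟨(hRbij i).injOn, (hSbij i).injOn, fun x hx x' hx' => ?_⟩)
    exact hVW.ne_of_mem ((hRbij i).mapsTo hx) ((hSbij i).mapsTo hx')

theorem HasSheetsOver.restrict [TopologicalSpace Y] {V W : Set Y} (h : HasSheetsOver φ d V)
    (hφ : Continuous φ) (hW : IsClosed W) (hWV : W ⊆ V) : HasSheetsOver φ d W := by
  obtain ⟨R, hR, hdisj, hbij⟩ := h
  exact ⟨fun i => R i ∩ φ ⁻¹' W, fun i => (hR i).inter (hW.preimage hφ),
    fun i j hij => (hdisj hij).mono inter_subset_left inter_subset_left,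
    fun i => (hbij i).subset_right hWV⟩

variable [TopologicalSpace Y]

theorem hasSheetsOver_univ [CompactSpace Y] (hφ : Continuous φ)
    (hloc : ∀ y, ∃ C, IsClopen C ∧ y ∈ C ∧ HasSheetsOver φ d C) : HasSheetsOver φ d univ := by
  suffices ∃ C, IsClopen C ∧ univ ⊆ C ∧ HasSheetsOver φ d C by
    obtain ⟨C, -, hC, h⟩ := this
    rwa [univ_subset_iff.mp hC] at h
  refine isCompact_univ.induction_on
    (p := fun S => ∃ C, IsClopen C ∧ S ⊆ C ∧ HasSheetsOver φ d C)
    ⟨∅, isClopen_empty, subset_rfl, hasSheetsOver_empty⟩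
    (fun S T hST ⟨C, hC, hTC, h⟩ => ⟨C, hC, hST.trans hTC, h⟩) ?_ fun y _ => ?_
  · rintro S T ⟨C, hC, hSC, hCs⟩ ⟨D, hD, hTD, hDs⟩
    refine ⟨C ∪ D, hC.union hD, union_subset_union hSC hTD, ?_⟩
    rw [← union_sdiff_self]
    exact hCs.union (hDs.restrict hφ (hD.isClosed.sdiff hC.isOpen) sdiff_subset)
      disjoint_sdiff_right
  · obtain ⟨C, hC, hyC, h⟩ := hloc y
    exact ⟨C, mem_nhdsWithin_of_mem_nhds (hC.isOpen.mem_nhds hyC), C, hC, subset_rfl, h⟩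

theorem exists_section_of_bijOn [CompactSpace X] [T2Space Y] (hφ : Continuous φ) {R : Set X}
    (hR : IsClosed R) (hbij : BijOn φ R univ) :
    ∃ f : Y → X, Continuous f ∧ (∀ y, φ (f y) = y) ∧ range f = R := by
  have := isCompact_iff_compactSpace.mp hR.isCompact
  let e : R ≃ Y := Equiv.ofBijective (fun x : R => φ x)
    ⟨hbij.injOn.injective, fun y => by
      obtain ⟨x, hx, rfl⟩ := hbij.surjOn (mem_univ y)
      exact ⟨⟨x, hx⟩, rfl⟩⟩
  let h : R ≃ₜ Y := (show Continuous e from hφ.comp continuous_subtype_val).homeoOfEquivCompactToT2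
  exact ⟨Subtype.val ∘ h.symm, continuous_subtype_val.comp h.symm.continuous,
    h.apply_symm_apply, (h.symm.surjective.range_comp _).trans Subtype.range_coe⟩

variable [T2Space X] [CompactSpace X] [TotallyDisconnectedSpace X]

theorem exists_pairwise_disjoint_isClopen {ι : Type*} [Finite ι] {p : ι → X} (hp : Injective p) :
    ∃ U : ι → Set X, (∀ i, IsClopen (U i) ∧ p i ∈ U i) ∧ Pairwise (Disjoint on U) := by
  have hsep : ∀ i j, ∃ S, IsClopen S ∧ p i ∈ S ∧ (i ≠ j → p j ∉ S) := by
    intro i j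
    by_cases hij : i = j
    · exact ⟨univ, isClopen_univ, mem_univ _, fun h => absurd hij h⟩
    · obtain ⟨S, hS, hiS, hSj⟩ :=
        compact_exists_isClopen_in_isOpen isOpen_compl_singleton (hp.ne hij)
      exact ⟨S, hS, hiS, fun _ hj => hSj hj rfl⟩
  choose S hS hiS hjS using hsep
  -- `U i` is the atom of the Boolean algebra generated by the `S j k` that contains `p i`.
  refine ⟨fun i => ⋂ jk : ι × ι, {x | x ∈ S jk.1 jk.2 ↔ p i ∈ S jk.1 jk.2}, fun i => ⟨?_, ?_⟩,
    fun i j hij => ?_⟩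
  · refine isClopen_iInter_of_finite fun jk => ?_
    by_cases h : p i ∈ S jk.1 jk.2
    · simp only [h, iff_true]
      exact hS jk.1 jk.2
    · simp only [h, iff_false]
      exact (hS jk.1 jk.2).compl
  · exact mem_iInter.mpr fun _ => Iff.rfl
  · refine disjoint_left.mpr fun x hxi hxj => hjS i j hij ?_
    exact (mem_iInter.mp hxj (i, j)).mp ((mem_iInter.mp hxi (i, j)).mpr (hiS i j))

variable [T2Space Y] [CompactSpace Y] [TotallyDisconnectedSpace Y]

theorem IsOpenMap.exists_isClopen_hasSheetsOver (hopen : IsOpenMap φ) (hφ : Continuous φ)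
    (hd : ExactlyDToOne φ d) (y : Y) : ∃ C, IsClopen C ∧ y ∈ C ∧ HasSheetsOver φ d C := by
  have := (hd y).1.to_subtype
  let e : Fin d ≃ φ ⁻¹' {y} := (Finite.equivFinOfCardEq (hd y).2).symm
  obtain ⟨U, hU, hUdisj⟩ := exists_pairwise_disjoint_isClopen (p := fun i => (e i : X))
    (Subtype.val_injective.comp e.injective)
  obtain ⟨C, hC, hyC, hCU⟩ := compact_exists_isClopen_in_isOpen
    (isOpen_iInter_of_finite fun i => hopen _ (hU i).1.isOpen)
    (mem_iInter.mpr fun i => ⟨e i, (hU i).2, (e i).2⟩)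
  refine ⟨C, hC, hyC, fun i => U i ∩ φ ⁻¹' C,
    fun i => (hU i).1.isClosed.inter (hC.isClosed.preimage hφ),
    fun i j hij => (hUdisj hij).mono inter_subset_left inter_subset_left,
    fun i => ⟨fun _ hx => hx.2, fun x hx x' hx' hxx' => ?_, fun y' hy' => ?_⟩⟩
  · have := (hd (φ x)).1.to_subtype
    refine (subset_iUnion_and_subsingleton_inter_of_nonempty_inter (t := φ ⁻¹' {φ x})
      (by simp [(hd _).2]) hUdisj fun j => ?_).2 i ⟨hx.1, rfl⟩ ⟨hx'.1, hxx'.symm⟩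
    obtain ⟨z, hz, hzx⟩ := mem_iInter.mp (hCU hx.2) j
    exact ⟨z, hz, hzx⟩
  · obtain ⟨x, hx, rfl⟩ := mem_iInter.mp (hCU hy') i
    exact ⟨x, ⟨hx, hy'⟩, rfl⟩

theorem IsOpenMap.exists_sections (hopen : IsOpenMap φ) (hφ : Continuous φ)
    (hd : ExactlyDToOne φ d) :
    ∃ f : Fin d → Y → X, (∀ i, Continuous (f i)) ∧ (∀ i y, φ (f i y) = y) ∧
      Pairwise (Disjoint on fun i => range (f i)) ∧ ⋃ i, range (f i) = univ := by
  obtain ⟨R, hR, hdisj, hbij⟩ := hasSheetsOver_univ hφ (hopen.exists_isClopen_hasSheetsOver hφ hd)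
  choose f hf hsec hrange using fun i => exists_section_of_bijOn hφ (hR i) (hbij i)
  refine ⟨f, hf, hsec, by simpa only [hrange] using hdisj, eq_univ_of_forall fun x => ?_⟩
  have := (hd (φ x)).1.to_subtype
  have hcover := (subset_iUnion_and_subsingleton_inter_of_nonempty_inter (t := φ ⁻¹' {φ x})
    (by simp [(hd _).2]) hdisj fun i => ?_).1 rfl
  · simpa only [hrange] using hcover
  · obtain ⟨z, hz, hzx⟩ := (hbij i).surjOn (mem_univ (φ x))
    exact ⟨z, hz, hzx⟩

end Sheets

section Subshift

theorem translate_injective {G α : Type*} [AddCommGroup G] (a : G) :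
    Injective (translate a : (G → α) → G → α) := fun f g h => by
  simpa only [translate_translate, neg_add_cancel, translate_zero] using
    congrArg (translate (-a)) h

theorem shiftMap_eq_translate (x : ℤ → A) : shiftMap x = translate (-1) x := by
  funext i
  simp only [shiftMap, translate_apply, sub_neg_eq_add]

variable [TopologicalSpace A] [TopologicalSpace B] {X : Set (ℤ → A)} {Y : Set (ℤ → B)}
  {φ : X → Y}

theorem IsSubshift.translate_mem (hX : IsSubshift X) {x : ℤ → A} (hx : x ∈ X) (k : ℤ) :
    translate k x ∈ X := by
  have hback : ∀ z ∈ X, translate 1 z ∈ X := fun z hz => by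
    obtain ⟨w, hw, rfl⟩ := hX.2.symm ▸ hz
    rwa [shiftMap_eq_translate, translate_translate, add_neg_cancel, translate_zero]
  have hforth : ∀ z ∈ X, translate (-1) z ∈ X := fun z hz =>
    hX.2 ▸ shiftMap_eq_translate z ▸ mem_image_of_mem shiftMap hz
  induction k using Int.induction_on with
  | zero => rwa [translate_zero]
  | succ k ih => rw [translate_add']; exact hback _ ih
  | pred k ih => rw [sub_eq_add_neg, translate_add']; exact hforth _ ih

theorem IsCode.translate_map (hX : IsSubshift X) (hφ : IsCode φ) (k : ℤ) (x : X) :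
    (φ ⟨translate k x, hX.translate_mem x.2 k⟩ : ℤ → B) = translate k (φ x) := by
  have hforth : ∀ z : X, (φ ⟨translate (-1) z, hX.translate_mem z.2 (-1)⟩ : ℤ → B) =
      translate (-1) (φ z) := fun z => by
    simpa only [shiftMap_eq_translate] using
      hφ.2 z (shiftMap_eq_translate (z : ℤ → A) ▸ hX.translate_mem z.2 (-1))
  have hback : ∀ z : X, (φ ⟨translate 1 z, hX.translate_mem z.2 1⟩ : ℤ → B) =
      translate 1 (φ z) := fun z => by
    have := congrArg (translate 1) (hforth ⟨translate 1 z, hX.translate_mem z.2 1⟩)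
    simp only [translate_translate, neg_add_cancel, add_neg_cancel, translate_zero] at this
    exact this.symm
  induction k using Int.induction_on generalizing x with
  | zero => simp only [translate_zero]
  | succ k ih =>
    simpa only [translate_add', ih] using hback ⟨translate k x, hX.translate_mem x.2 k⟩
  | pred k ih =>
    simpa only [sub_eq_add_neg, translate_add', ih] using
      hforth ⟨translate (-k) x, hX.translate_mem x.2 _⟩

theorem IsCode.map_translate_eq (hX : IsSubshift X) (hφ : IsCode φ) {x x' : X}
    (h : φ x = φ x') (k : ℤ) :
    φ ⟨translate k x, hX.translate_mem x.2 k⟩ = φ ⟨translate k x', hX.translate_mem x'.2 k⟩ :=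
  Subtype.ext (by rw [hφ.translate_map hX, hφ.translate_map hX, h])

theorem continuous_coe_apply (X : Set (ℤ → A)) (i : ℤ) : Continuous fun x : X => (x : ℤ → A) i :=
  (continuous_apply i).comp continuous_subtype_val

theorem continuous_coe_apply_prod (X : Set (ℤ → A)) (i : ℤ) :
    Continuous fun q : X × X => ((q.1 : ℤ → A) i, (q.2 : ℤ → A) i) :=
  ((continuous_coe_apply X i).comp continuous_fst).prodMk
    ((continuous_coe_apply X i).comp continuous_snd)

def InjOnCylinders {β : Type*} (φ : X → β) (n : ℕ) : Prop :=
  ∀ x x' : X, (∀ i : ℤ, |i| ≤ n → (x : ℤ → A) i = (x' : ℤ → A) i) → φ x = φ x' → x = x'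

theorem InjOnCylinders.biClosing (hX : IsSubshift X) (hφ : IsCode φ) {n : ℕ}
    (h : InjOnCylinders φ n) : BiClosing φ := by
  have key : ∀ (k : ℤ) (x x' : X),
      (∀ i : ℤ, |i| ≤ n → (x : ℤ → A) (i + k) = (x' : ℤ → A) (i + k)) → φ x = φ x' → x = x' :=
    fun k x x' hxx' hφxx' => by
    have := h _ _ (fun i hi => by simpa using hxx' i hi) (hφ.map_translate_eq hX hφxx' (-k))
    exact Subtype.ext (translate_injective _ (congrArg Subtype.val this))
  refine ⟨fun x x' ⟨N, hN⟩ => key (N - n) x x' fun i hi => hN _ ?_,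
    fun x x' ⟨N, hN⟩ => key (N + n) x x' fun i hi => hN _ ?_⟩ <;>
  · rw [abs_le] at hi
    omega

theorem InjOnCylinders.isLocallyInjective [DiscreteTopology A] {β : Type*} {φ : X → β} {n : ℕ}
    (h : InjOnCylinders φ n) : IsLocallyInjective φ := by
  refine isLocallyInjective_iff_nhds.mpr fun x =>
    ⟨{x' | ∀ i : ℤ, |i| ≤ n → (x' : ℤ → A) i = (x : ℤ → A) i}, ?_,
      fun x₁ h₁ x₂ h₂ => h x₁ x₂ fun i hi => (h₁ i hi).trans (h₂ i hi).symm⟩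
  have hcoord : ∀ i : ℤ, ∀ᶠ x' : X in 𝓝 x, (x' : ℤ → A) i = (x : ℤ → A) i := fun i =>
    ((isOpen_discrete {(x : ℤ → A) i}).preimage (continuous_coe_apply X i)).mem_nhds rfl
  filter_upwards [(eventually_all_finset (Finset.Icc (-n : ℤ) n)).mpr fun i _ => hcoord i]
    with x' hx' i hi
  exact hx' i (Finset.mem_Icc.mpr (abs_le.mp hi))

variable [Finite A] [DiscreteTopology A] [DiscreteTopology B]

theorem exists_finset_forall_exists_ne (hX : IsClosed X) {E : Set (X × X)} (hE : IsClosed E)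
    {I : Set ℤ} (h : ∀ q ∈ E, ∃ i ∈ I, (q.1 : ℤ → A) i ≠ (q.2 : ℤ → A) i) :
    ∃ F : Finset ℤ, ↑F ⊆ I ∧ ∀ q ∈ E, ∃ i ∈ F, (q.1 : ℤ → A) i ≠ (q.2 : ℤ → A) i := by
  have := isCompact_iff_compactSpace.mp hX.isCompact
  obtain ⟨J, hJI, hJ, hEJ⟩ := hE.isCompact.elim_finite_subcover_image
    (c := fun i => {q : X × X | (q.1 : ℤ → A) i ≠ (q.2 : ℤ → A) i})
    (fun i _ => (isOpen_discrete {p : A × A | p.1 ≠ p.2}).preimage (continuous_coe_apply_prod X i))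
    (fun q hq => by simpa using h q hq)
  refine ⟨hJ.toFinset, by simpa using hJI, fun q hq => ?_⟩
  simpa using hEJ hq

theorem IsLocallyInjective.exists_injOnCylinders {β : Type*} [TopologicalSpace β] [T2Space β]
    {φ : X → β} (hli : IsLocallyInjective φ) (hX : IsClosed X) (hφ : Continuous φ) :
    ∃ n, InjOnCylinders φ n := by
  obtain ⟨F, -, hF⟩ := exists_finset_forall_exists_ne hX (hli.isClosed_setOf_eq_and_ne hφ)
    (I := univ) fun q hq => by simpa using Function.ne_iff.mp (Subtype.coe_ne_coe.mpr hq.2)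
  refine ⟨F.sup Int.natAbs, fun x x' hxx' hφxx' => by_contra fun hne => ?_⟩
  obtain ⟨i, hiF, hi⟩ := hF (x, x') ⟨hφxx', hne⟩
  exact hi (hxx' i (by rw [Int.abs_eq_natAbs]; exact_mod_cast Finset.le_sup hiF))

theorem IsCode.exists_finite_determining_set (hφ : IsCode φ) (hX : IsSubshift X) {I : Set ℤ}
    (h : ∀ x x' : X, φ x = φ x' → (∀ i ∈ I, (x : ℤ → A) i = (x' : ℤ → A) i) →
      (x : ℤ → A) 0 = (x' : ℤ → A) 0) :
    ∃ F : Finset ℤ, ↑F ⊆ I ∧ ∀ x x' : X, φ x = φ x' → ∀ c : ℤ,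
      (∀ i ∈ F, (x : ℤ → A) (i + c) = (x' : ℤ → A) (i + c)) →
        (x : ℤ → A) c = (x' : ℤ → A) c := by
  have hE : IsClosed {q : X × X | φ q.1 = φ q.2 ∧ (q.1 : ℤ → A) 0 ≠ (q.2 : ℤ → A) 0} :=
    (isClosed_eq (hφ.1.comp continuous_fst) (hφ.1.comp continuous_snd)).inter
      ((isClosed_discrete {p : A × A | p.1 ≠ p.2}).preimage (continuous_coe_apply_prod X 0))
  obtain ⟨F, hFI, hF⟩ := exists_finset_forall_exists_ne hX.1 hE (I := I) fun q ⟨hq, hq0⟩ => by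
    by_contra! hc
    exact hq0 (h _ _ hq hc)
  refine ⟨F, hFI, fun x x' hxx' c hc => by_contra fun hne => ?_⟩
  obtain ⟨i, hiF, hi⟩ := hF (_, _) ⟨hφ.map_translate_eq hX hxx' (-c), by simpa using hne⟩
  exact hi (by simpa using hc i hiF)

theorem BiClosing.exists_injOnCylinders (hX : IsSubshift X) (hφ : IsCode φ) (h : BiClosing φ) :
    ∃ n, InjOnCylinders φ n := by
  obtain ⟨F, hFneg, hF⟩ := hφ.exists_finite_determining_set hX (I := Iio 0)
    fun x x' hxx' hagree => congrFun (congrArg Subtype.val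
      (h.1 x x' ⟨-1, fun i hi => hagree i (mem_Iio.mpr (by omega))⟩ hxx')) 0
  obtain ⟨G, hGpos, hG⟩ := hφ.exists_finite_determining_set hX (I := Ioi 0)
    fun x x' hxx' hagree => congrFun (congrArg Subtype.val
      (h.2 x x' ⟨1, fun i hi => hagree i (mem_Ioi.mpr (by omega))⟩ hxx')) 0
  set n := (F ∪ G).sup Int.natAbs
  have hbound : ∀ i ∈ F ∪ G, i.natAbs ≤ n := fun i hi => Finset.le_sup hi
  refine ⟨n, fun x x' hxx' hφxx' => ?_⟩
  -- Agreement on `[-(n + m), n + m]` spreads one step to the right via `F` (right closing)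
  -- and one step to the left via `G` (left closing).
  have hgrow : ∀ m : ℕ, ∀ c : ℤ, c.natAbs ≤ n + m → (x : ℤ → A) c = (x' : ℤ → A) c := by
    intro m
    induction m with
    | zero => exact fun c hc => hxx' c (by rw [Int.abs_eq_natAbs]; exact_mod_cast hc)
    | succ m ih =>
      intro c hc
      rcases le_or_gt c.natAbs (n + m) with hcm | hcm
      · exact ih c hcm
      rcases le_or_gt 0 c with hc0 | hc0
      · refine hF x x' hφxx' c fun i hi => ih _ ?_
        have := hbound i (Finset.mem_union_left _ hi)
        have : i < 0 := hFneg hi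
        omega
      · refine hG x x' hφxx' c fun i hi => ih _ ?_
        have := hbound i (Finset.mem_union_right _ hi)
        have : 0 < i := hGpos hi
        omega
  exact Subtype.ext (funext fun c => hgrow c.natAbs c (by omega))

end Subshift

theorem d_to_one_tfae {A : Type*} {B : Type*} [Finite A] [TopologicalSpace A] [DiscreteTopology A]
    [Finite B] [TopologicalSpace B] [DiscreteTopology B]
    {X : Set (ℤ → A)} {Y : Set (ℤ → B)} (hX : IsSubshift X) (hY : IsSubshift Y)
    (φ : X → Y) (hφ : IsCode φ)
    (d : ℕ) (hd : ExactlyDToOne φ d) :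
    List.TFAE [IsOpenMap φ,
      BiClosing φ,
      ∃ f : Fin d → (Y → X), (∀ i, Continuous (f i)) ∧ (∀ i y, φ (f i y) = y) ∧
        (∀ i j, i ≠ j → Disjoint (Set.range (f i)) (Set.range (f j))) ∧
        (⋃ i, Set.range (f i)) = Set.univ,
      ∀ x : X, ∃ f : Y → X, Continuous f ∧ (∀ y, φ (f y) = y) ∧ x ∈ Set.range f] := by
  have := isCompact_iff_compactSpace.mp hX.1.isCompact
  have := isCompact_iff_compactSpace.mp hY.1.isCompact
  tfae_have 1 → 3 := fun h => h.exists_sections hφ.1 hd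
  tfae_have 3 → 2 := fun ⟨f, hf, hsec, hdisj, hcover⟩ =>
    have ⟨_, hn⟩ := (isLocallyInjective_of_sections hf hsec hdisj hcover).exists_injOnCylinders
      hX.1 hφ.1
    hn.biClosing hX hφ
  tfae_have 2 → 1 := fun h =>
    have ⟨_, hn⟩ := h.exists_injOnCylinders hX hφ
    hn.isLocallyInjective.isOpenMap hφ.1 hd
  tfae_have 3 → 4 := fun ⟨f, hf, hsec, _, hcover⟩ x =>
    have ⟨i, hi⟩ := mem_iUnion.mp (hcover ▸ mem_univ x)
    ⟨f i, hf i, hsec i, hi⟩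
  tfae_have 4 → 1 := isOpenMap_of_forall_mem_range_section
  tfae_finish
end
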